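/- arXiv:1906.06104 — 2 statements merged into one kernel-verified Lean document; each statement's English description precedes it below -/
import Mathlib

section
/- Let R be a commutative noetherian ring and f : M → N a map of finitely generated R-modules. Then the set {𝔭 ∈ Spec(R) : f_𝔭 = 0} is open in the Zariski topology on Spec(R). -/
/-!
`f_𝔭 = 0` exactly when every `f m` is killed by some `s ∉ 𝔭`, i.e. when `(range f)_𝔭 = 0`,
i.e. when `𝔭` lies outside the support of `range f`. Since `M` is finitely generated, so is
`range f`, and the support of a finitely generated module is the closed set `V(Ann)`.
-/

namespace LocalizedModule

section Semiring

variable {R M N : Type*} [CommSemiring R] [AddCommMonoid M] [AddCommMonoid N]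
  [Module R M] [Module R N]

theorem map_eq_zero_iff (S : Submonoid R) (f : M →ₗ[R] N) :
    map S f = 0 ↔ ∀ m, ∃ s : S, s • f m = 0 := by
  simp_rw [← IsLocalizedModule.eq_zero_iff S (mkLinearMap S N)]
  constructor
  · intro h m
    simpa [h] using (map_mk S f m 1).symm
  · intro h
    ext x
    induction x using induction_on with
    | h m s =>
      rw [map_mk, LinearMap.zero_apply, IsLocalizedModule.mk_eq_mk', IsLocalizedModule.mk'_eq_zero]
      exact h m

end Semiring

variable {R M N : Type*} [CommRing R] [AddCommGroup M] [AddCommGroup N] [Module R M] [Module R N]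

theorem map_eq_zero_iff_notMem_support_range {p : PrimeSpectrum R} (f : M →ₗ[R] N) :
    map p.asIdeal.primeCompl f = 0 ↔ p ∉ Module.support R (LinearMap.range f) := by
  rw [map_eq_zero_iff, Module.notMem_support_iff']
  constructor
  · rintro h ⟨_, m, rfl⟩
    obtain ⟨s, hs⟩ := h m
    exact ⟨s, s.2, Subtype.ext hs⟩
  · intro h m
    obtain ⟨r, hr, hrm⟩ := h ⟨f m, m, rfl⟩
    exact ⟨⟨r, hr⟩, congrArg Subtype.val hrm⟩

end LocalizedModule

theorem mapZeroLocus_isOpen_general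
    {R : Type*} [CommRing R]
    {M N : Type*} [AddCommGroup M] [AddCommGroup N] [Module R M] [Module R N]
    [Module.Finite R M] (f : M →ₗ[R] N) :
    IsOpen {𝔭 : PrimeSpectrum R |
      LocalizedModule.map 𝔭.asIdeal.primeCompl f = 0} := by
  have hlocus : {𝔭 : PrimeSpectrum R | LocalizedModule.map 𝔭.asIdeal.primeCompl f = 0} =
      (Module.support R (LinearMap.range f))ᶜ :=
    Set.ext fun _ ↦ LocalizedModule.map_eq_zero_iff_notMem_support_range f
  rw [hlocus]
  exact Module.isClosed_support.isOpen_compl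

/-- Let `R` be a commutative noetherian ring and `f : M → N` a map of
finitely generated `R`-modules.  Then the set `{𝔭 ∈ Spec R : f_𝔭 = 0}` is open in the
Zariski topology on `Spec R`. -/
theorem mapZeroLocus_isOpen
    {R : Type*} [CommRing R] [IsNoetherianRing R]
    {M N : Type*} [AddCommGroup M] [AddCommGroup N] [Module R M] [Module R N]
    [Module.Finite R M] [Module.Finite R N] (f : M →ₗ[R] N) :
    IsOpen {𝔭 : PrimeSpectrum R |
      LocalizedModule.map 𝔭.asIdeal.primeCompl f = 0} :=
  mapZeroLocus_isOpen_general f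
end

section
/- Let R be a commutative noetherian ring, 𝔭 a prime ideal, and M, N finitely generated R-modules. For any R_𝔭-linear map f : M_𝔭 → N_𝔭 there exist r ∈ R ∖ 𝔭 and an R-linear map g : M → N such that r • f equals the localization g_𝔭. -/
theorem exists_smul_eq_localizedMap_general
    {R : Type*} [CommRing R] [IsNoetherianRing R]
    {M N : Type*} [AddCommGroup M] [AddCommGroup N] [Module R M] [Module R N]
    [Module.Finite R M] (𝔭 : Ideal R) [𝔭.IsPrime]
    (f : LocalizedModule 𝔭.primeCompl M →ₗ[Localization.AtPrime 𝔭]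
        LocalizedModule 𝔭.primeCompl N) :
    ∃ (r : R), r ∈ 𝔭.primeCompl ∧ ∃ (g : M →ₗ[R] N),
      r • (LinearMap.restrictScalars R f) = LocalizedModule.map 𝔭.primeCompl g := by
  have : Module.FinitePresentation R M := Module.finitePresentation_of_finite R M
  -- For finitely presented `M`, `g ↦ g_𝔭` exhibits `Hom(M_𝔭, N_𝔭)` as the localization of
  -- `Hom(M, N)` at `𝔭`, so `f` is a fraction `g / r`.
  obtain ⟨⟨g, r⟩, hfg⟩ := IsLocalizedModule.surj 𝔭.primeCompl
    (LocalizedModule.map 𝔭.primeCompl (M := M) (N := N)) f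
  exact ⟨r, r.2, g, congrArg (LinearMap.restrictScalars R) hfg⟩

/-- Let `R` be a commutative noetherian ring, `𝔭` a prime ideal, and
`M`, `N` finitely generated `R`-modules.  For any `R_𝔭`-linear map `f : M_𝔭 → N_𝔭`
there exist `r ∈ R ∖ 𝔭` and an `R`-linear map `g : M → N` such that `r • f` equals the
localization `g_𝔭`. -/
theorem exists_smul_eq_localizedMap
    {R : Type*} [CommRing R] [IsNoetherianRing R]
    {M N : Type*} [AddCommGroup M] [AddCommGroup N] [Module R M] [Module R N]
    [Module.Finite R M] [Module.Finite R N] (𝔭 : Ideal R) [𝔭.IsPrime]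
    (f : LocalizedModule 𝔭.primeCompl M →ₗ[Localization.AtPrime 𝔭]
        LocalizedModule 𝔭.primeCompl N) :
    ∃ (r : R), r ∈ 𝔭.primeCompl ∧ ∃ (g : M →ₗ[R] N),
      r • (LinearMap.restrictScalars R f) = LocalizedModule.map 𝔭.primeCompl g :=
  exists_smul_eq_localizedMap_general 𝔭 f
end
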